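/- Let M and n be natural numbers and let r, s : {1,…,M} → ℝ satisfy 0 ≤ r_i < 1 and 0 ≤ s_i ≤ 1 for all i. Then ( ∏_{i=1}^M (1 − r_i) ) · ∑_{(I₁,I₂)} [ |I₁| = n ] ∏_{i∈I₁} ( r_i s_i / (1 − r_i) ) · ∏_{i∈I₂} ( r_i (1 − s_i) / (1 − r_i) ) = ∑_{A ⊆ {1,…,M}, |A| = n} ∏_{i∈A} (r_i s_i) · ∏_{i∉A} (1 − r_i s_i), where the left-hand sum ranges over all pairs (I₁, I₂) of disjoint subsets of {1,…,M} (equivalently, over all partitions I₁ ⊎ I₂ ⊎ I₃ = {1,…,M}) and [·] is the indicator of the condition |I₁| = n. -/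
import Mathlib


open Finset

/-- Proposition 3 identified with the Poisson-binomial pmf: the
multi-Bernoulli partition-sum formula for the FoV cardinality equals
`∑_{|A| = n} ∏_{i∈A} r_i s_i ∏_{i∉A} (1 − r_i s_i)`. -/
theorem mb_fov_cardinality_eq_poisson_binomial (M n : ℕ)
    (r s : Fin M → ℝ) (hr0 : ∀ i, 0 ≤ r i) (hr1 : ∀ i, r i < 1)
    (hs0 : ∀ i, 0 ≤ s i) (hs1 : ∀ i, s i ≤ 1) :
    (∏ i, (1 - r i)) *
      ∑ I₁ ∈ (univ : Finset (Fin M)).powerset,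
        ∑ I₂ ∈ ((univ : Finset (Fin M)) \ I₁).powerset,
          (if I₁.card = n then (1 : ℝ) else 0) *
            (∏ i ∈ I₁, r i * s i / (1 - r i)) *
            ∏ i ∈ I₂, r i * (1 - s i) / (1 - r i)
    = ∑ A ∈ (univ : Finset (Fin M)).powersetCard n,
        (∏ i ∈ A, r i * s i) * ∏ i ∈ (univ : Finset (Fin M)) \ A, (1 - r i * s i) := by
  have hne : ∀ i, (1 : ℝ) - r i ≠ 0 := fun i => by have := hr1 i; linarith
  rw [Finset.mul_sum]
  have key : ∀ I₁ ∈ (univ : Finset (Fin M)).powerset,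
      (∏ i, (1 - r i)) *
        ∑ I₂ ∈ ((univ : Finset (Fin M)) \ I₁).powerset,
          (if I₁.card = n then (1 : ℝ) else 0) *
            (∏ i ∈ I₁, r i * s i / (1 - r i)) *
            ∏ i ∈ I₂, r i * (1 - s i) / (1 - r i)
      = (if I₁.card = n then (1 : ℝ) else 0) *
          ((∏ i ∈ I₁, r i * s i) *
            ∏ i ∈ (univ : Finset (Fin M)) \ I₁, (1 - r i * s i)) := by
    intro I₁ hI₁
    have hsub : I₁ ⊆ univ := mem_powerset.mp hI₁
    have hsum : ∑ I₂ ∈ ((univ : Finset (Fin M)) \ I₁).powerset,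
        ∏ i ∈ I₂, r i * (1 - s i) / (1 - r i)
        = ∏ i ∈ (univ : Finset (Fin M)) \ I₁, (r i * (1 - s i) / (1 - r i) + 1) := by
      rw [Finset.prod_add]
      refine Finset.sum_congr rfl fun t ht => ?_
      simp
    rw [← Finset.mul_sum, hsum]
    rw [← Finset.prod_sdiff hsub (f := fun i => 1 - r i)]
    have h1 : (∏ i ∈ I₁, (1 - r i)) * ∏ i ∈ I₁, r i * s i / (1 - r i)
        = ∏ i ∈ I₁, r i * s i := by
      rw [← Finset.prod_mul_distrib]
      exact Finset.prod_congr rfl fun i _ => by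
        rw [mul_comm, div_mul_cancel₀ _ (hne i)]
    have h2 : (∏ i ∈ (univ : Finset (Fin M)) \ I₁, (1 - r i)) *
        ∏ i ∈ (univ : Finset (Fin M)) \ I₁, (r i * (1 - s i) / (1 - r i) + 1)
        = ∏ i ∈ (univ : Finset (Fin M)) \ I₁, (1 - r i * s i) := by
      rw [← Finset.prod_mul_distrib]
      refine Finset.prod_congr rfl fun i _ => ?_
      rw [mul_add, mul_one, mul_comm, div_mul_cancel₀ _ (hne i)]
      ring
    calc ((∏ i ∈ (univ : Finset (Fin M)) \ I₁, (1 - r i)) * ∏ i ∈ I₁, (1 - r i)) *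
          ((if I₁.card = n then (1 : ℝ) else 0) * (∏ i ∈ I₁, r i * s i / (1 - r i)) *
            ∏ i ∈ (univ : Finset (Fin M)) \ I₁, (r i * (1 - s i) / (1 - r i) + 1))
        = (if I₁.card = n then (1 : ℝ) else 0) *
            (((∏ i ∈ I₁, (1 - r i)) * ∏ i ∈ I₁, r i * s i / (1 - r i)) *
             ((∏ i ∈ (univ : Finset (Fin M)) \ I₁, (1 - r i)) *
              ∏ i ∈ (univ : Finset (Fin M)) \ I₁, (r i * (1 - s i) / (1 - r i) + 1))) := by
          ring
      _ = _ := by rw [h1, h2]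
  rw [Finset.sum_congr rfl key]
  rw [Finset.powersetCard_eq_filter, Finset.sum_filter]
  refine Finset.sum_congr rfl fun A _ => ?_
  split_ifs <;> simp
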